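/- arXiv:1510.01841 — 3 statements merged into one kernel-verified Lean document; each statement's English description precedes it below -/
import Mathlib

section
/- Let L be a Lie algebra over ℝ (or any commutative ring), let T, U ∈ L, and let m be a scalar such that ⁅⁅T,U⁆,U⁆ = (2m) • U. Then the following three iterated bracket identities hold: (i) ⁅U, ⁅U, ⁅T, ⁅T, U⁆⁆⁆⁆ = (4m²) • U; (ii) ⁅U, ⁅T, ⁅U, ⁅U, ⁅T, ⁅T, U⁆⁆⁆⁆⁆⁆ = (−8m³) • U; (iii) ⁅U, ⁅U, ⁅U, ⁅T, ⁅T, ⁅T, U⁆⁆⁆⁆⁆⁆ = 0. -/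
/-!
Put `X = ⁅T, U⁆`, so the hypothesis reads `⁅X, U⁆ = c • U` with `c = 2m`. By the Jacobi identity
the operator `ad U ∘ ad T` acts as `-c` on both `U` and `X`; applying it, and `ad U`, to these
eigenvectors gives (i) and (ii). For (iii), with `Y = ⁅T, X⁆`, the two contributions to
`⁅U, ⁅U, ⁅T, Y⁆⁆⁆` are `±c² • X` and cancel.
-/

section BracketRelation

variable {R L : Type*} [CommRing R] [LieRing L] [LieAlgebra R L] {T U : L} {c : R}

theorem lie_lie_right_eq_neg_smul (h : ⁅⁅T, U⁆, U⁆ = c • U) : ⁅U, ⁅T, U⁆⁆ = -c • U := by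
  rw [← lie_skew, h, neg_smul]

theorem lie_lie_lie_right_eq_neg_smul (h : ⁅⁅T, U⁆, U⁆ = c • U) :
    ⁅U, ⁅T, ⁅T, U⁆⁆⁆ = -c • ⁅T, U⁆ := by
  rw [leibniz_lie, lie_lie_right_eq_neg_smul h, ← lie_skew U T, neg_lie, lie_self, neg_zero,
    zero_add, lie_smul]

theorem lie_lie_lie_lie_eq_sq_smul (h : ⁅⁅T, U⁆, U⁆ = c • U) :
    ⁅U, ⁅U, ⁅T, ⁅T, U⁆⁆⁆⁆ = c ^ 2 • U := by
  rw [lie_lie_lie_right_eq_neg_smul h, lie_smul, lie_lie_right_eq_neg_smul h, smul_smul]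
  ring_nf

theorem lie_lie_lie_lie_lie_eq_zero (h : ⁅⁅T, U⁆, U⁆ = c • U) :
    ⁅U, ⁅U, ⁅T, ⁅T, ⁅T, U⁆⁆⁆⁆⁆ = 0 := by
  have hUX := lie_lie_right_eq_neg_smul h
  have hUY := lie_lie_lie_right_eq_neg_smul h
  have hUXY : ⁅U, ⁅⁅T, U⁆, ⁅T, ⁅T, U⁆⁆⁆⁆ = c ^ 2 • ⁅T, U⁆ := by
    rw [leibniz_lie, hUX, hUY, smul_lie, hUY, lie_smul, lie_self, smul_zero, add_zero, smul_smul]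
    ring_nf
  have hUTY : ⁅U, ⁅T, ⁅T, ⁅T, U⁆⁆⁆⁆ = -⁅⁅T, U⁆, ⁅T, ⁅T, U⁆⁆⁆ + -c • ⁅T, ⁅T, U⁆⁆ := by
    rw [leibniz_lie, hUY, ← lie_skew U T, neg_lie, lie_smul]
  rw [hUTY, lie_add, lie_neg, hUXY, lie_smul, hUY, smul_smul]
  ring_nf
  abel

end BracketRelation

/-- In a Lie algebra `L` over a commutative ring `R`, if
`⁅⁅T,U⁆,U⁆ = (2m) • U`, then the three iterated bracket identities
`⁅U,⁅U,⁅T,⁅T,U⁆⁆⁆⁆ = (4m²) • U`, `⁅U,⁅T,⁅U,⁅U,⁅T,⁅T,U⁆⁆⁆⁆⁆⁆ = (−8m³) • U`,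
and `⁅U,⁅U,⁅U,⁅T,⁅T,⁅T,U⁆⁆⁆⁆⁆⁆ = 0` hold. -/
theorem stmt0 {R : Type*} {L : Type*} [CommRing R] [LieRing L] [LieAlgebra R L]
    (T U : L) (m : R) (h : ⁅⁅T, U⁆, U⁆ = (2 * m) • U) :
    ⁅U, ⁅U, ⁅T, ⁅T, U⁆⁆⁆⁆ = (4 * m ^ 2) • U ∧
    ⁅U, ⁅T, ⁅U, ⁅U, ⁅T, ⁅T, U⁆⁆⁆⁆⁆⁆ = (-(8 * m ^ 3)) • U ∧
    ⁅U, ⁅U, ⁅U, ⁅T, ⁅T, ⁅T, U⁆⁆⁆⁆⁆⁆ = 0 := by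
  have h₁ := lie_lie_lie_lie_eq_sq_smul h
  refine ⟨by rw [h₁]; ring_nf, ?_, by rw [lie_lie_lie_lie_lie_eq_zero h, lie_zero]⟩
  rw [h₁, lie_smul, lie_smul, lie_lie_right_eq_neg_smul h, smul_smul]
  ring_nf
end

section
/- Let f₀ be a smooth function on 𝕋^d × ℝ^d, rapidly decaying in v. Define K(f) := |E(f)|² − 2G(f), where G(f) : 𝕋^d → ℝ is the unique smooth zero-mean solution of Δ_x G(f) = div_x(ρ(f) E(f)). Set g(t,x,v) := f₀(x, v + t ∂_x K(f₀)(x)) for t ∈ ℝ. Then for all t: (i) ρ(g(t)) = ρ(f₀), E(g(t)) = E(f₀), and K(g(t)) = K(f₀); (ii) g solves ∂_t g − ∂_x K(g(t)) · ∂_v g = 0 with g(0) = f₀. In other words, the flow of the Hamiltonian [[T,U],U] is given explicitly by φ^t(f₀)(x,v) = f₀(x, v + t ∂_x K(f₀)(x)). -/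
open MeasureTheory Real

noncomputable section

/-- Points of `ℝ^d` (also used as lifts of points of the torus `𝕋^d = ℝ^d/(2πℤ)^d`). -/
abbrev Vec (d : ℕ) := Fin d → ℝ

/-- A fundamental domain for the torus `𝕋^d = ℝ^d/(2πℤ)^d`. -/
def Box (d : ℕ) : Set (Vec d) := Set.pi Set.univ fun _ => Set.Ioc 0 (2 * π)

/-- Partial derivative `∂_{x_i}`. -/
def pd {d : ℕ} (i : Fin d) (g : Vec d → ℝ) : Vec d → ℝ :=
  fun x => fderiv ℝ g x (Pi.single i 1)

/-- Laplacian `Δ = ∑ i ∂_{x_i}²`. -/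
def lap {d : ℕ} (g : Vec d → ℝ) : Vec d → ℝ := fun x => ∑ i, pd i (pd i g) x

/-- `(2πℤ)^d`-periodicity: a function of `x ∈ ℝ^d` descending to the torus. -/
def PeriodicVec {d : ℕ} (g : Vec d → ℝ) : Prop :=
  ∀ (x : Vec d) (k : Fin d → ℤ), g (fun i => x i + 2 * π * (k i : ℝ)) = g x

/-- `G` is the smooth, `2π`-periodic, zero-mean solution of `Δ G = rhs` on the torus. -/
def ZeroMeanLapSol {d : ℕ} (rhs G : Vec d → ℝ) : Prop :=
  ContDiff ℝ (⊤ : ℕ∞) G ∧ PeriodicVec G ∧ (∫ x in Box d, G x) = 0 ∧ ∀ x, lap G x = rhs x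

/-- A smooth function on `𝕋^d × ℝ^d` (presented as a `2π`-periodic-in-`x` function on
`ℝ^d × ℝ^d`) which is rapidly decaying in `v` together with all its derivatives. -/
def GoodPhase {d : ℕ} (f : Vec d → Vec d → ℝ) : Prop :=
  ContDiff ℝ (⊤ : ℕ∞) (fun p : Vec d × Vec d => f p.1 p.2) ∧
  (∀ (x v : Vec d) (k : Fin d → ℤ), f (fun i => x i + 2 * π * (k i : ℝ)) v = f x v) ∧
  (∀ n k : ℕ, ∃ C : ℝ, ∀ x v : Vec d,
    ‖v‖ ^ k * ‖iteratedFDeriv ℝ n (fun p : Vec d × Vec d => f p.1 p.2) (x, v)‖ ≤ C)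

/-- Density `ρ(f)(x) = ∫ f(x,v) dv`. -/
def dens {d : ℕ} (f : Vec d → Vec d → ℝ) : Vec d → ℝ := fun x => ∫ v, f x v

/-- Total mass `m(f) = (2π)^{-d} ∫∫ f dx dv`. -/
def mTot {d : ℕ} (f : Vec d → Vec d → ℝ) : ℝ :=
  ((2 * π) ^ d)⁻¹ * ∫ x in Box d, ∫ v, f x v

/-- `φ` is the electric potential of `f`: the smooth `2π`-periodic zero-mean solution of
`−Δφ = ρ(f) − m(f)`, i.e. `Δφ = m(f) − ρ(f)`. -/
def IsElectricPotential {d : ℕ} (f : Vec d → Vec d → ℝ) (φ : Vec d → ℝ) : Prop :=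
  ZeroMeanLapSol (fun x => mTot f - dens f x) φ

/-- Partial derivative in `x` of a phase-space function. -/
def pdx {d : ℕ} (i : Fin d) (f : Vec d → Vec d → ℝ) : Vec d → Vec d → ℝ :=
  fun x v => pd i (fun y => f y v) x

/-- Partial derivative in `v` of a phase-space function. -/
def pdv {d : ℕ} (i : Fin d) (f : Vec d → Vec d → ℝ) : Vec d → Vec d → ℝ :=
  fun x v => pd i (fun w => f x w) v

lemma pd_contDiff {d : ℕ} (i : Fin d) {g : Vec d → ℝ} (hg : ContDiff ℝ (⊤ : ℕ∞) g) :
    ContDiff ℝ (⊤ : ℕ∞) (pd i g) :=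
  (hg.fderiv_right (by simp)).clm_apply contDiff_const

lemma fderiv_translate {d : ℕ} {F : Vec d → ℝ} (hF : Differentiable ℝ F) (c v : Vec d) :
    fderiv ℝ (fun u => F (u + c)) v = fderiv ℝ F (v + c) := by
  have h1 : HasFDerivAt (fun u : Vec d => F (u + c))
      ((fderiv ℝ F (v + c)).comp (ContinuousLinearMap.id ℝ (Vec d))) v :=
    (hF (v + c)).hasFDerivAt.comp v ((hasFDerivAt_id v).add_const c)
  simpa using h1.fderiv

lemma pd_periodic {d : ℕ} (i : Fin d) {h : Vec d → ℝ} (hd : Differentiable ℝ h)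
    (hp : PeriodicVec h) : PeriodicVec (pd i h) := by
  intro x k
  have hfun : (fun u : Vec d => h (u + fun j => 2 * π * (k j : ℝ))) = h := by
    funext u; exact hp u k
  have := fderiv_translate hd (fun j => 2 * π * (k j : ℝ)) x
  rw [hfun] at this
  show pd i h (x + fun j => 2 * π * (k j : ℝ)) = pd i h x
  unfold pd
  rw [← this]

-- divergence integral: ∫ over Icc of ∑ (pd i h)^2 equals 0 for periodic harmonic smooth h
lemma energy_integral_zero (n : ℕ) {h : Vec (n+1) → ℝ} (hsm : ContDiff ℝ (⊤ : ℕ∞) h)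
    (hper : PeriodicVec h) (hlap : ∀ x, lap h x = 0) :
    (∫ x in Set.Icc (0 : Vec (n+1)) (fun _ => 2 * π), ∑ i, (pd i h x)^2) = 0 := by
  set V : Vec (n+1) → Vec (n+1) := fun x j => h x * pd j h x with hV
  have hdiff : Differentiable ℝ h := hsm.differentiable (by simp)
  have hVsm : ContDiff ℝ (⊤ : ℕ∞) V := contDiff_pi.2 fun j => hsm.mul (pd_contDiff j hsm)
  have hVdiff : Differentiable ℝ V := hVsm.differentiable (by simp)
  -- divergence identity
  have hdiv : ∀ x, (∑ i, fderiv ℝ V x (Pi.single i 1) i) = ∑ i, (pd i h x)^2 := by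
    intro x
    have hcomp : ∀ i : Fin (n+1), fderiv ℝ V x (Pi.single i 1) i
        = fderiv ℝ (fun y => h y * pd i h y) x (Pi.single i 1) := by
      intro i
      rw [fderiv_pi (φ := fun j y => h y * pd j h y) (fun j => (hdiff x).mul
        (((pd_contDiff j hsm).differentiable (by simp)) x))]
      rfl
    have hmul : ∀ i : Fin (n+1), fderiv ℝ (fun y => h y * pd i h y) x (Pi.single i 1)
        = h x * pd i (pd i h) x + pd i h x * pd i h x := by
      intro i
      rw [fderiv_fun_mul (hdiff x) (((pd_contDiff i hsm).differentiable (by simp)) x)]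
      simp [pd, mul_comm]
    rw [Finset.sum_congr rfl fun i _ => (hcomp i).trans (hmul i), Finset.sum_add_distrib,
      ← Finset.mul_sum]
    have : (∑ i, pd i (pd i h) x) = 0 := hlap x
    rw [this, mul_zero, zero_add]
    exact Finset.sum_congr rfl fun i _ => (sq (pd i h x)).symm
  have hle : (fun _ => (0:ℝ) : Vec (n+1)) ≤ (fun _ => 2*π) := fun i => by positivity
  have hcontf : Continuous fun x : Vec (n+1) => ∑ i, (pd i h x)^2 :=
    continuous_finset_sum _ fun i _ => ((pd_contDiff i hsm).continuous).pow 2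
  have Hi : IntegrableOn (fun x => ∑ i, fderiv ℝ V x (Pi.single i 1) i)
      (Set.Icc (0 : Vec (n+1)) (fun _ => 2*π)) := by
    rw [funext hdiv]
    exact hcontf.continuousOn.integrableOn_compact isCompact_Icc
  have key := integral_divergence_of_hasFDerivAt_off_countable
      (a := fun _ => 0) (b := fun _ => 2*π) hle V (fun x => fderiv ℝ V x) ∅
      Set.countable_empty hVsm.continuous.continuousOn
      (fun x _ => (hVdiff x).hasFDerivAt) Hi
  have hVz : ∀ (i : Fin (n+1)) (y : Fin n → ℝ),
      V (i.insertNth (2*π) y) = V (i.insertNth 0 y) := by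
    intro i y
    have harg : (fun m => (i.insertNth (0:ℝ) y : Vec (n+1)) m
        + 2 * π * (((Pi.single i 1 : Fin (n+1) → ℤ) m : ℤ) : ℝ))
        = i.insertNth (2*π) y := by
      funext m
      by_cases hm : m = i
      · subst hm
        simp
      · obtain ⟨j, rfl⟩ := Fin.exists_succAbove_eq hm
        simp [Pi.single_eq_of_ne (Fin.succAbove_ne i j)]
    funext j
    show h _ * pd j h _ = h _ * pd j h _
    rw [← harg, hper _ (Pi.single i 1), pd_periodic j hdiff hper _ (Pi.single i 1)]
  have hfaces : ∀ i : Fin (n+1), (fun y => V (i.insertNth (2*π) y) i)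
      = fun y => V (i.insertNth (0:ℝ) y) i := fun i =>
    funext fun y => congrFun (hVz i y) i
  simp only [← hdiv]
  rw [show (0 : Vec (n+1)) = (fun _ => (0:ℝ)) from rfl, key]
  refine Finset.sum_eq_zero fun i _ => ?_
  rw [sub_eq_zero]
  congr 1
  funext y
  exact congrFun (hVz i y) i

lemma box_ae_eq_icc (d : ℕ) :
    (Box d : Set (Vec d)) =ᵐ[volume] Set.Icc (0 : Vec d) (fun _ => 2 * π) := by
  rw [volume_pi]
  exact MeasureTheory.Measure.univ_pi_Ioc_ae_eq_Icc

lemma box_subset_closure_interior (d : ℕ) :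
    Box d ⊆ closure (interior (Box d)) := by
  have h1 : (Set.pi Set.univ fun _ : Fin d => Set.Ioo (0:ℝ) (2 * π)) ⊆ interior (Box d) :=
    interior_maximal (Set.pi_mono fun i _ => Set.Ioo_subset_Ioc_self)
      (isOpen_set_pi Set.finite_univ fun _ _ => isOpen_Ioo)
  refine subset_trans ?_ (closure_mono h1)
  rw [closure_pi_set]
  refine Set.pi_mono fun i _ => ?_
  rw [closure_Ioo (by positivity : (0:ℝ) ≠ 2 * π)]
  exact Set.Ioc_subset_Icc_self

lemma integrableOn_box {d : ℕ} {g : Vec d → ℝ} (hg : Continuous g) :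
    IntegrableOn g (Box d) := by
  have : IntegrableOn g (Set.Icc (0 : Vec d) (fun _ => 2 * π)) :=
    hg.continuousOn.integrableOn_compact isCompact_Icc
  refine this.mono_set ?_
  rw [← Set.pi_univ_Icc]
  exact Set.pi_mono fun i _ => by simpa using Set.Ioc_subset_Icc_self

lemma exists_translate_mem_box {d : ℕ} (x : Vec d) :
    ∃ k : Fin d → ℤ, (fun i => x i + 2 * π * (k i : ℝ)) ∈ Box d := by
  refine ⟨fun i => 1 - ⌈x i / (2 * π)⌉, fun i _ => ?_⟩
  have h2π : (0:ℝ) < 2 * π := by positivity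
  have h1 : x i / (2 * π) ≤ ⌈x i / (2 * π)⌉ := Int.le_ceil _
  have h2 : ((⌈x i / (2 * π)⌉ : ℤ) : ℝ) < x i / (2 * π) + 1 := Int.ceil_lt_add_one _
  have h1' : x i ≤ ⌈x i / (2 * π)⌉ * (2 * π) := (div_le_iff₀ h2π).1 h1
  have h2' : ((⌈x i / (2 * π)⌉ : ℤ) : ℝ) * (2 * π) < x i + 2 * π := by
    have := mul_lt_mul_of_pos_right h2 h2π
    rwa [add_mul, one_mul, div_mul_cancel₀ _ (ne_of_gt h2π)] at this
  constructor
  · push_cast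
    nlinarith
  · push_cast
    nlinarith

lemma grad_sq_zero {d : ℕ} {h : Vec d → ℝ} (hsm : ContDiff ℝ (⊤ : ℕ∞) h) (hper : PeriodicVec h)
    (hlap : ∀ x, lap h x = 0) : ∀ x i, pd i h x = 0 := by
  cases d with
  | zero => exact fun x i => i.elim0
  | succ n =>
    set f : Vec (n+1) → ℝ := fun x => ∑ i, (pd i h x)^2 with hf
    have hcontf : Continuous f :=
      continuous_finset_sum _ fun i _ => ((pd_contDiff i hsm).continuous).pow 2
    have hX : (∫ x in Box (n+1), f x) = 0 := by
      rw [setIntegral_congr_set (box_ae_eq_icc (n+1))]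
      exact energy_integral_zero n hsm hper hlap
    have hae : f =ᵐ[volume.restrict (Box (n+1))] 0 :=
      (integral_eq_zero_iff_of_nonneg
        (fun x => Finset.sum_nonneg fun i _ => sq_nonneg _) (integrableOn_box hcontf)).1 hX
    have heq : Set.EqOn f 0 (Box (n+1)) :=
      MeasureTheory.Measure.eqOn_of_ae_eq hae hcontf.continuousOn continuousOn_const
        (box_subset_closure_interior _)
    have hz : ∀ x, f x = 0 := by
      intro x
      obtain ⟨k, hk⟩ := exists_translate_mem_box x
      have hperf : PeriodicVec f := fun z k' =>
        Finset.sum_congr rfl fun i _ => by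
          rw [pd_periodic i (hsm.differentiable (by simp)) hper z k']
      rw [← hperf x k]
      exact heq hk
    intro x i
    have h2 : (pd i h x)^2 = 0 :=
      (Finset.sum_eq_zero_iff_of_nonneg (fun j _ => sq_nonneg (pd j h x))).1 (hz x) i
        (Finset.mem_univ i)
    exact pow_eq_zero_iff (two_ne_zero) |>.1 h2

lemma pd_sub {d : ℕ} (i : Fin d) {a b : Vec d → ℝ} (ha : Differentiable ℝ a)
    (hb : Differentiable ℝ b) :
    pd i (fun x => a x - b x) = fun x => pd i a x - pd i b x := by
  funext x
  unfold pd
  rw [fderiv_fun_sub (ha x) (hb x)]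
  rfl

lemma volume_box (d : ℕ) : (volume (Box d)).toReal = (2 * π) ^ d := by
  rw [show Box d = Set.pi Set.univ (fun _ : Fin d => Set.Ioc (0:ℝ) (2*π)) from rfl, volume_pi_pi]
  simp [Real.volume_Ioc, ENNReal.toReal_prod, ENNReal.toReal_ofReal Real.two_pi_pos.le,
    ENNReal.toReal_ofReal Real.pi_pos.le]

lemma uniq {d : ℕ} {rhs G G' : Vec d → ℝ} (hG : ZeroMeanLapSol rhs G)
    (hG' : ZeroMeanLapSol rhs G') : G' = G := by
  set h : Vec d → ℝ := fun x => G' x - G x with hh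
  have hsm : ContDiff ℝ (⊤ : ℕ∞) h := hG'.1.sub hG.1
  have hdiff : Differentiable ℝ h := hsm.differentiable (by simp)
  have hper : PeriodicVec h := by
    intro x k
    simp only [hh, hG'.2.1 x k, hG.2.1 x k]
  have hpdh : ∀ i : Fin d, pd i h = fun x => pd i G' x - pd i G x := fun i =>
    pd_sub i (hG'.1.differentiable (by simp)) (hG.1.differentiable (by simp))
  have hlap : ∀ x, lap h x = 0 := by
    intro x
    have : ∀ i : Fin d, pd i (pd i h) x = pd i (pd i G') x - pd i (pd i G) x := by
      intro i
      rw [hpdh i]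
      rw [pd_sub i ((pd_contDiff i hG'.1).differentiable (by simp))
        ((pd_contDiff i hG.1).differentiable (by simp))]
    unfold lap
    rw [Finset.sum_congr rfl fun i _ => this i, Finset.sum_sub_distrib]
    have h1 := hG'.2.2.2 x
    have h2 := hG.2.2.2 x
    unfold lap at h1 h2
    rw [h1, h2, sub_self]
  have hgrad : ∀ x i, pd i h x = 0 := grad_sq_zero hsm hper hlap
  have hfz : ∀ x, fderiv ℝ h x = 0 := by
    intro x
    ext w
    have hw : w = ∑ i, w i • (Pi.single i (1:ℝ) : Vec d) := by
      funext j
      simp [Finset.sum_apply, Pi.single_apply]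
    rw [ContinuousLinearMap.zero_apply]
    conv_lhs => rw [hw]
    rw [map_sum]
    refine Finset.sum_eq_zero fun i _ => ?_
    rw [(fderiv ℝ h x).map_smul]
    have := hgrad x i
    unfold pd at this
    rw [this, smul_zero]
  have hconst : ∀ x y : Vec d, h x = h y := is_const_of_fderiv_eq_zero hdiff hfz
  have hint : (∫ x in Box d, h x) = 0 := by
    have := integral_sub ((integrableOn_box (hG'.1.continuous)))
      ((integrableOn_box (hG.1.continuous)))
    rw [hh]
    simp only [this, hG'.2.2.1, hG.2.2.1, sub_zero]
  funext y
  have hc : ∀ x, h x = h y := fun x => hconst x y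
  have : (∫ x in Box d, h x) = (2 * π) ^ d * h y := by
    rw [setIntegral_congr_fun (by
      change MeasurableSet (Set.pi Set.univ fun _ : Fin d => Set.Ioc (0:ℝ) (2*π))
      exact MeasurableSet.univ_pi fun _ => measurableSet_Ioc) (fun x _ => hc x),
      setIntegral_const, smul_eq_mul, measureReal_def, volume_box]
  rw [hint] at this
  have hne : (2 * π : ℝ) ^ d ≠ 0 := by positivity
  have : h y = 0 := by
    rcases mul_eq_zero.1 this.symm with h' | h'
    · exact absurd h' hne
    · exact h'
  simpa [hh, sub_eq_zero] using this

/-- with `K(f₀) = |E(f₀)|² − 2 Δ_x^{-1} div_x(ρ(f₀)E(f₀))` and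
`g(t,x,v) = f₀(x, v + t ∂_x K(f₀)(x))`, one has (i) `ρ(g t) = ρ f₀`, `E(g t) = E(f₀)` and
`K(g t) = K(f₀)` (expressed through uniqueness of the zero-mean solutions of the relevant
Poisson problems), and (ii) `g` solves `∂_t g − ∂_x K(g)·∂_v g = 0` with `g 0 = f₀`: the flow
of the Hamiltonian `[[T,U],U]` is `φ^t(f₀)(x,v) = f₀(x, v + t ∂_x K(f₀)(x))`. -/
theorem stmt3 (d : ℕ) (f₀ : Vec d → Vec d → ℝ) (hf₀ : GoodPhase f₀)
    (φ₀ : Vec d → ℝ) (hφ₀ : IsElectricPotential f₀ φ₀)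
    (E₀ : Vec d → Vec d) (hE₀ : ∀ x i, E₀ x i = - pd i φ₀ x)
    (G₀ : Vec d → ℝ)
    (hG₀ : ZeroMeanLapSol (fun x => ∑ i, pd i (fun y => dens f₀ y * E₀ y i) x) G₀)
    (K : Vec d → ℝ) (hK : ∀ x, K x = (∑ i, (E₀ x i) ^ 2) - 2 * G₀ x)
    (g : ℝ → Vec d → Vec d → ℝ)
    (hg : ∀ t x v, g t x v = f₀ x (fun i => v i + t * pd i K x)) :
    g 0 = f₀ ∧
    (∀ t, dens (g t) = dens f₀) ∧
    (∀ t φ', IsElectricPotential (g t) φ' → φ' = φ₀) ∧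
    (∀ t G', ZeroMeanLapSol (fun x => ∑ i, pd i (fun y => dens (g t) y * E₀ y i) x) G' →
      G' = G₀) ∧
    (∀ t x v, HasDerivAt (fun s => g s x v)
      (∑ i, pd i K x * pdv i (g t) x v) t) := by
  have hdens : ∀ t, dens (g t) = dens f₀ := by
    intro t
    funext x
    have hx : ∀ v : Vec d, g t x v = f₀ x (v + fun i => t * pd i K x) := fun v => hg t x v
    show (∫ v, g t x v) = ∫ v, f₀ x v
    simp only [hx]
    exact integral_add_right_eq_self (fun v => f₀ x v) (fun i => t * pd i K x)
  have hm : ∀ t, mTot (g t) = mTot f₀ := by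
    intro t
    unfold mTot
    congr 1
    have : (fun x => ∫ v, g t x v) = fun x => ∫ v, f₀ x v := hdens t
    rw [this]
  refine ⟨?_, hdens, ?_, ?_, ?_⟩
  · funext x v
    rw [hg]
    congr 1
    funext i
    simp
  · intro t φ' hφ'
    unfold IsElectricPotential at hφ' hφ₀
    rw [hm t, hdens t] at hφ'
    exact uniq hφ₀ hφ'
  · intro t G' hG'
    rw [hdens t] at hG'
    exact uniq hG₀ hG'
  · intro t x v
    set w : Vec d := fun i => pd i K x with hw
    have hF : ContDiff ℝ (⊤ : ℕ∞) (fun u => f₀ x u) := hf₀.1.comp (contDiff_const.prodMk contDiff_id)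
    have hFd : Differentiable ℝ (fun u => f₀ x u) := hF.differentiable (by simp)
    have hfun : (fun s : ℝ => g s x v) = fun s => f₀ x (v + s • w) := by
      funext s; rw [hg]; rfl
    have hline : HasDerivAt (fun s : ℝ => v + s • w) w t := by
      simpa using ((hasDerivAt_id t).smul_const w).const_add v
    have hd : HasDerivAt (fun s => f₀ x (v + s • w))
        (fderiv ℝ (fun u => f₀ x u) (v + t • w) w) t :=
      (hFd (v + t • w)).hasFDerivAt.comp_hasDerivAt t hline
    have hpdv : ∀ i, pdv i (g t) x v
        = fderiv ℝ (fun u => f₀ x u) (v + t • w) (Pi.single i 1) := by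
      intro i
      have hfun2 : (fun u => g t x u) = fun u => f₀ x (u + t • w) := by
        funext u; rw [hg]; rfl
      show pd i (fun u => g t x u) v = _
      unfold pd
      rw [hfun2, fderiv_translate hFd (t • w) v]
    have hw2 : w = ∑ i, w i • (Pi.single i (1:ℝ) : Vec d) := by
      funext j; simp [Finset.sum_apply, Pi.single_apply]
    have hsum : (∑ i, pd i K x * pdv i (g t) x v)
        = fderiv ℝ (fun u => f₀ x u) (v + t • w) w := by
      set L := fderiv ℝ (fun u => f₀ x u) (v + t • w) with hL
      conv_rhs => rw [hw2]
      rw [map_sum]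
      refine Finset.sum_congr rfl fun i _ => ?_
      rw [hpdv i, L.map_smul]
      rfl
    rw [hfun, hsum]
    exact hd
end
end

section
/- Let f be a smooth function on 𝕋^d × ℝ^d, rapidly decaying in v, and let Z(f)(x) := −∫_{ℝ^d} ζ(x,w) dw, where for each w ∈ ℝ^d, ζ(·,w) : 𝕋^d → ℝ is the unique smooth zero-mean solution of Δ_x ζ(·,w) = w · ∂_x f(·,w). Then the iterated Poisson bracket [[T,U],U] evaluated at f, namely the integral ∫_{𝕋^d×ℝ^d} ( Z(f)(x) + v · E(f)(x) ) ( ∂_x φ(f)(x) · ∂_v f(x,v) ) dx dv, equals ∫_{𝕋^d} ρ(f)(x) |E(f)(x)|² dx. -/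
open MeasureTheory Real

noncomputable section

variable {d : ℕ} {f : Vec d → Vec d → ℝ}

private lemma gp_contDiff (hf : GoodPhase f) (x : Vec d) :
    ContDiff ℝ (⊤ : ℕ∞) (fun v => f x v) :=
  hf.1.comp (ContDiff.prodMk contDiff_const contDiff_id)

private lemma gp_pdv_eq (hf : GoodPhase f) (i : Fin d) (x v : Vec d) :
    pdv i f x v
      = fderiv ℝ (fun p : Vec d × Vec d => f p.1 p.2) (x, v) (0, Pi.single i 1) := by
  have h1 : HasFDerivAt (fun w : Vec d => ((x, w) : Vec d × Vec d))
      (((0 : Vec d →L[ℝ] Vec d)).prod (ContinuousLinearMap.id ℝ (Vec d))) v :=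
    HasFDerivAt.prodMk (hasFDerivAt_const x v) (hasFDerivAt_id v)
  have h2 : HasFDerivAt (fun w : Vec d => f x w)
      ((fderiv ℝ (fun p : Vec d × Vec d => f p.1 p.2) (x, v)).comp
        (((0 : Vec d →L[ℝ] Vec d)).prod (ContinuousLinearMap.id ℝ (Vec d)))) v :=
    ((hf.1.differentiable (by simp) (x, v)).hasFDerivAt).comp v h1
  show fderiv ℝ (fun w => f x w) v (Pi.single i 1) = _
  rw [h2.fderiv]
  simp

private lemma gp_bound_f (hf : GoodPhase f) (k : ℕ) :
    ∃ C, ∀ x v : Vec d, ‖v‖ ^ k * |f x v| ≤ C := by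
  obtain ⟨C, hC⟩ := hf.2.2 0 k
  exact ⟨C, fun x v => by
    simpa [norm_iteratedFDeriv_zero, Real.norm_eq_abs] using hC x v⟩

private lemma gp_bound_pdv (hf : GoodPhase f) (i : Fin d) (k : ℕ) :
    ∃ C, ∀ x v : Vec d, ‖v‖ ^ k * |pdv i f x v| ≤ C := by
  obtain ⟨C, hC⟩ := hf.2.2 1 k
  refine ⟨C, fun x v => ?_⟩
  refine le_trans ?_ (hC x v)
  have hb : |pdv i f x v|
      ≤ ‖iteratedFDeriv ℝ 1 (fun p : Vec d × Vec d => f p.1 p.2) (x, v)‖ := by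
    rw [gp_pdv_eq hf i x v, ← Real.norm_eq_abs]
    have hnorm : ‖((0 : Vec d), (Pi.single i (1:ℝ) : Vec d))‖ ≤ 1 := by
      rw [Prod.norm_def]
      simp [Pi.norm_single]
    calc ‖fderiv ℝ (fun p : Vec d × Vec d => f p.1 p.2) (x, v) (0, Pi.single i 1)‖
        ≤ ‖fderiv ℝ (fun p : Vec d × Vec d => f p.1 p.2) (x, v)‖
          * ‖((0 : Vec d), (Pi.single i (1:ℝ) : Vec d))‖ :=
          (fderiv ℝ _ (x, v)).le_opNorm _
      _ ≤ ‖fderiv ℝ (fun p : Vec d × Vec d => f p.1 p.2) (x, v)‖ * 1 := by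
          gcongr
      _ = ‖iteratedFDeriv ℝ 1 (fun p : Vec d × Vec d => f p.1 p.2) (x, v)‖ := by
          rw [mul_one, ← norm_iteratedFDeriv_fderiv (n := 0), norm_iteratedFDeriv_zero]
  exact mul_le_mul_of_nonneg_left hb (by positivity)

private lemma gp_cont_pdv (hf : GoodPhase f) (i : Fin d) (x : Vec d) :
    Continuous (fun v => pdv i f x v) := by
  have : (fun v => pdv i f x v) = fun v =>
      fderiv ℝ (fun p : Vec d × Vec d => f p.1 p.2) (x, v) (0, Pi.single i 1) :=
    funext fun v => gp_pdv_eq hf i x v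
  rw [this]
  exact ((hf.1.continuous_fderiv (by simp)).comp
    (continuous_const.prodMk continuous_id)).clm_apply continuous_const

private lemma integrable_of_decay' {d : ℕ} {h : Vec d → ℝ} (hc : Continuous h)
    {C0 C1 : ℝ} (h0 : ∀ v, |h v| ≤ C0) (h1 : ∀ v, ‖v‖ ^ (d + 1) * |h v| ≤ C1) :
    Integrable h := by
  have hint : Integrable (fun v : Vec d => (1 + ‖v‖) ^ (-(d + 1 : ℝ))) :=
    integrable_one_add_norm (by simp)
  refine ((hint.const_mul (2 ^ (d + 1) * (C0 + C1))).mono' hc.aestronglyMeasurable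
    (Filter.Eventually.of_forall fun v => ?_))
  have hv0 : (0 : ℝ) < 1 + ‖v‖ := by positivity
  have h2 : (1 + ‖v‖) ^ (d + 1) ≤ 2 ^ (d + 1) * (1 + ‖v‖ ^ (d + 1)) := by
    calc (1 + ‖v‖) ^ (d + 1) ≤ (2 * max 1 ‖v‖) ^ (d + 1) := by
          apply pow_le_pow_left₀ hv0.le
          rcases le_total ‖v‖ 1 with h | h
          · rw [max_eq_left h]; linarith
          · rw [max_eq_right h]; linarith
      _ = 2 ^ (d + 1) * (max 1 ‖v‖) ^ (d + 1) := by rw [mul_pow]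
      _ ≤ 2 ^ (d + 1) * (1 + ‖v‖ ^ (d + 1)) := by
          apply mul_le_mul_of_nonneg_left _ (by positivity)
          rcases le_total ‖v‖ 1 with h | h
          · rw [max_eq_left h]; simp [pow_nonneg (norm_nonneg v)]
          · rw [max_eq_right h]; nlinarith [pow_nonneg (norm_nonneg v) (d+1)]
  have key : |h v| * (1 + ‖v‖) ^ (d + 1) ≤ 2 ^ (d + 1) * (C0 + C1) := by
    calc |h v| * (1 + ‖v‖) ^ (d + 1)
        ≤ |h v| * (2 ^ (d + 1) * (1 + ‖v‖ ^ (d + 1))) :=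
          mul_le_mul_of_nonneg_left h2 (abs_nonneg _)
      _ = 2 ^ (d + 1) * (|h v| + ‖v‖ ^ (d + 1) * |h v|) := by ring
      _ ≤ 2 ^ (d + 1) * (C0 + C1) :=
          mul_le_mul_of_nonneg_left (add_le_add (h0 v) (h1 v)) (by positivity)
  have hrw : (1 + ‖v‖) ^ (-(d + 1 : ℝ)) = ((1 + ‖v‖) ^ (d + 1) : ℝ)⁻¹ := by
    rw [Real.rpow_neg hv0.le, ← Real.rpow_natCast (1 + ‖v‖) (d + 1)]
    push_cast; ring_nf
  rw [Real.norm_eq_abs, hrw, ← div_eq_mul_inv, le_div_iff₀ (by positivity)]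
  exact key

private lemma gp_int_pdv (hf : GoodPhase f) (x : Vec d) (i : Fin d) :
    Integrable (fun v => pdv i f x v) := by
  obtain ⟨C0, h0⟩ := gp_bound_pdv hf i 0
  obtain ⟨C1, h1⟩ := gp_bound_pdv hf i (d + 1)
  exact integrable_of_decay' (gp_cont_pdv hf i x)
    (fun v => by simpa using h0 x v) (fun v => h1 x v)

private lemma gp_int_coord_pdv (hf : GoodPhase f) (x : Vec d) (j i : Fin d) :
    Integrable (fun v => v j * pdv i f x v) := by
  obtain ⟨C0, h0⟩ := gp_bound_pdv hf i 1
  obtain ⟨C1, h1⟩ := gp_bound_pdv hf i (d + 2)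
  have hvj : ∀ v : Vec d, |v j| ≤ ‖v‖ := fun v => by
    simpa [Real.norm_eq_abs] using norm_le_pi_norm v j
  refine integrable_of_decay' (C0 := C0) (C1 := C1)
    ((continuous_apply j).mul (gp_cont_pdv hf i x)) (fun v => ?_) (fun v => ?_)
  · calc |v j * pdv i f x v| = |v j| * |pdv i f x v| := abs_mul _ _
      _ ≤ ‖v‖ * |pdv i f x v| :=
          mul_le_mul_of_nonneg_right (hvj v) (abs_nonneg _)
      _ ≤ C0 := by simpa using h0 x v
  · calc ‖v‖ ^ (d + 1) * |v j * pdv i f x v|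
        = ‖v‖ ^ (d + 1) * (|v j| * |pdv i f x v|) := by rw [abs_mul]
      _ ≤ ‖v‖ ^ (d + 1) * (‖v‖ * |pdv i f x v|) := by
          apply mul_le_mul_of_nonneg_left _ (by positivity)
          exact mul_le_mul_of_nonneg_right (hvj v) (abs_nonneg _)
      _ = ‖v‖ ^ (d + 2) * |pdv i f x v| := by ring
      _ ≤ C1 := h1 x v

private lemma gp_int_f (hf : GoodPhase f) (x : Vec d) :
    Integrable (fun v => f x v) := by
  obtain ⟨C0, h0⟩ := gp_bound_f hf 0
  obtain ⟨C1, h1⟩ := gp_bound_f hf (d + 1)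
  exact integrable_of_decay' (gp_contDiff hf x).continuous
    (fun v => by simpa using h0 x v) (fun v => h1 x v)

private lemma gp_int_coord_f (hf : GoodPhase f) (x : Vec d) (j : Fin d) :
    Integrable (fun v => v j * f x v) := by
  obtain ⟨C0, h0⟩ := gp_bound_f hf 1
  obtain ⟨C1, h1⟩ := gp_bound_f hf (d + 2)
  have hvj : ∀ v : Vec d, |v j| ≤ ‖v‖ := fun v => by
    simpa [Real.norm_eq_abs] using norm_le_pi_norm v j
  refine integrable_of_decay' (C0 := C0) (C1 := C1)
    ((continuous_apply j).mul (gp_contDiff hf x).continuous) (fun v => ?_) (fun v => ?_)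
  · calc |v j * f x v| = |v j| * |f x v| := abs_mul _ _
      _ ≤ ‖v‖ * |f x v| := mul_le_mul_of_nonneg_right (hvj v) (abs_nonneg _)
      _ ≤ C0 := by simpa using h0 x v
  · calc ‖v‖ ^ (d + 1) * |v j * f x v|
        = ‖v‖ ^ (d + 1) * (|v j| * |f x v|) := by rw [abs_mul]
      _ ≤ ‖v‖ ^ (d + 1) * (‖v‖ * |f x v|) := by
          apply mul_le_mul_of_nonneg_left _ (by positivity)
          exact mul_le_mul_of_nonneg_right (hvj v) (abs_nonneg _)
      _ = ‖v‖ ^ (d + 2) * |f x v| := by ring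
      _ ≤ C1 := h1 x v

private lemma gp_integral_pdv (hf : GoodPhase f) (x : Vec d) (i : Fin d) :
    ∫ v, pdv i f x v = 0 := by
  have h := integral_mul_fderiv_eq_neg_fderiv_mul_of_integrable (μ := volume)
    (f := fun _ : Vec d => (1 : ℝ)) (g := fun v => f x v) (v := Pi.single i 1)
    (by simpa using (integrable_zero (Vec d) ℝ volume))
    (by simpa [pdv, pd] using gp_int_pdv hf x i)
    (by simpa using gp_int_f hf x)
    (fun y _ => (differentiable_const (1:ℝ)) y) (fun y _ => (gp_contDiff hf x).differentiable (by simp) y)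
  simpa [pdv, pd] using h

private lemma gp_integral_coord_pdv (hf : GoodPhase f) (x : Vec d) (j i : Fin d) :
    ∫ v, v j * pdv i f x v = -((if j = i then (1:ℝ) else 0) * ∫ v, f x v) := by
  have hproj : (fun v : Vec d => v j)
      = (ContinuousLinearMap.proj (R := ℝ) (φ := fun _ : Fin d => ℝ) j) := rfl
  have hfd : ∀ v : Vec d, fderiv ℝ (fun w : Vec d => w j) v
      = (ContinuousLinearMap.proj (R := ℝ) (φ := fun _ : Fin d => ℝ) j) := fun v => by
    rw [hproj]; exact ContinuousLinearMap.fderiv _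
  have h := integral_mul_fderiv_eq_neg_fderiv_mul_of_integrable (μ := volume)
    (f := fun v : Vec d => v j) (g := fun v => f x v) (v := Pi.single i 1)
    (by
      simp only [hfd, ContinuousLinearMap.proj_apply, Pi.single_apply]
      exact (gp_int_f hf x).const_mul _)
    (gp_int_coord_pdv hf x j i)
    (gp_int_coord_f hf x j)
    (by rw [hproj]; exact fun y _ => (ContinuousLinearMap.proj (R := ℝ) (φ := fun _ : Fin d => ℝ) j).differentiable y)
    (fun y _ => (gp_contDiff hf x).differentiable (by simp) y)
  rw [show (∫ v, v j * pdv i f x v)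
      = ∫ v, v j * fderiv ℝ (fun w => f x w) v (Pi.single i 1) from rfl, h]
  simp only [hfd, ContinuousLinearMap.proj_apply, Pi.single_apply]
  rw [integral_const_mul]

private lemma gp_inner (hf : GoodPhase f) (x : Vec d) (A : ℝ) (b : Fin d → ℝ) :
    ∫ v, (A + ∑ j, v j * (- b j)) * ∑ i, b i * pdv i f x v
      = (∫ v, f x v) * ∑ i, (- b i) ^ 2 := by
  have hstep : ∀ v : Vec d, (A + ∑ j, v j * (- b j)) * ∑ i, b i * pdv i f x v
      = ∑ i, ((A * b i) * pdv i f x v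
          + ∑ j, ((- b j) * b i) * (v j * pdv i f x v)) := by
    intro v
    rw [Finset.mul_sum]
    refine Finset.sum_congr rfl fun i _ => ?_
    rw [add_mul, Finset.sum_mul]
    congr 1
    · ring
    · exact Finset.sum_congr rfl fun j _ => by ring
  simp only [hstep]
  rw [integral_finset_sum (μ := volume) Finset.univ
    (f := fun (i : Fin d) (v : Vec d) => (A * b i) * pdv i f x v
      + ∑ j, ((- b j) * b i) * (v j * pdv i f x v))
    (fun i _ => ((gp_int_pdv hf x i).const_mul _).add
      (integrable_finset_sum _ fun j _ => (gp_int_coord_pdv hf x j i).const_mul _))]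
  have hi : ∀ i : Fin d, (∫ v, ((A * b i) * pdv i f x v
      + ∑ j, ((- b j) * b i) * (v j * pdv i f x v)))
      = (- b i) ^ 2 * ∫ v, f x v := by
    intro i
    rw [integral_add ((gp_int_pdv hf x i).const_mul _)
        (integrable_finset_sum _ fun j _ => (gp_int_coord_pdv hf x j i).const_mul _),
      integral_const_mul, gp_integral_pdv hf x i,
      integral_finset_sum _ fun j _ => (gp_int_coord_pdv hf x j i).const_mul _]
    simp only [integral_const_mul, gp_integral_coord_pdv hf x]
    rw [mul_zero, zero_add]
    have hite : ∀ j : Fin d, (- b j * b i) * -((if j = i then (1:ℝ) else 0) * ∫ v, f x v)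
        = if j = i then (- b i) ^ 2 * ∫ v, f x v else 0 := fun j => by
      split_ifs with h
      · subst h; ring
      · ring
    simp only [hite]
    simp
  simp only [hi]
  rw [← Finset.sum_mul, mul_comm]

/-- the iterated Poisson bracket `[[T,U],U]` evaluated at `f`, i.e. the
integral `∫∫ (Z(f)(x) + v·E(f)(x)) (∂_x φ(f)(x)·∂_v f(x,v)) dx dv`, equals
`∫ ρ(f)(x) |E(f)(x)|² dx`.  Here `E(f) = −∂_x φ(f)` and `Z(f)(x) = −∫ ζ(x,w) dw` with
`ζ(·,w)` the zero-mean solution of `Δ_x ζ(·,w) = w·∂_x f(·,w)`. -/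
theorem stmt7 (d : ℕ) (f : Vec d → Vec d → ℝ) (hf : GoodPhase f)
    (φf : Vec d → ℝ) (hφf : IsElectricPotential f φf)
    (ζ : Vec d → Vec d → ℝ)
    (hζsmooth : ContDiff ℝ (⊤ : ℕ∞) (fun p : Vec d × Vec d => ζ p.1 p.2))
    (hζper : ∀ (x w : Vec d) (k : Fin d → ℤ),
      ζ (fun i => x i + 2 * π * (k i : ℝ)) w = ζ x w)
    (hζmean : ∀ w, (∫ x in Box d, ζ x w) = 0)
    (hζeq : ∀ x w, lap (fun y => ζ y w) x = ∑ i, w i * pdx i f x w)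
    (Z : Vec d → ℝ) (hZ : ∀ x, Z x = - ∫ w, ζ x w) :
    (∫ x in Box d, ∫ v,
        (Z x + ∑ i, v i * (- pd i φf x)) * ∑ i, pd i φf x * pdv i f x v)
      = ∫ x in Box d, dens f x * ∑ i, (- pd i φf x) ^ 2 := by
  refine integral_congr_ae (Filter.Eventually.of_forall fun x => ?_)
  exact gp_inner hf x (Z x) (fun i => pd i φf x)
end
end
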